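/- Let X^i be a matrix with unit ℓ2-norm columns spanning a linear subspace S_i, and let w ∈ S_i be a unit-norm vector. Let ĉ be a minimizer of ‖c‖_1 subject to w = X^i c. Then for any matrix X^k with unit ℓ2-norm columns, ‖(X^k)^⊤ w‖_∞ ≤ μ(X^i, X^k) · ‖ĉ‖_1 ≤ μ(X^i, X^k) / r(P^i), where P^i := conv(± X^i). -/

import Mathlib

open scoped RealInnerProductSpace Classical

noncomputable section

namespace SSCOMP

variable {D : ℕ}

noncomputable def ompSelect {ι : Type*} [Fintype ι] [LinearOrder ι] [Nonempty ι]
    (a : ι → EuclideanSpace ℝ (Fin D)) (q : EuclideanSpace ℝ (Fin D)) : ι :=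
  (Finset.univ.filter fun i => ∀ m, |⟪a m, q⟫| ≤ |⟪a i, q⟫|).min' (by
    obtain ⟨i, -, hi⟩ := Finset.exists_max_image (Finset.univ : Finset ι)
      (fun m => |⟪a m, q⟫|) Finset.univ_nonempty
    exact ⟨i, Finset.mem_filter.mpr ⟨Finset.mem_univ i, fun m => hi m (Finset.mem_univ m)⟩⟩)

noncomputable def ompState {ι : Type*} [Fintype ι] [LinearOrder ι]
    (a : ι → EuclideanSpace ℝ (Fin D)) (b : EuclideanSpace ℝ (Fin D)) :
    ℕ → Finset ι × EuclideanSpace ℝ (Fin D)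
  | 0 => (∅, b)
  | k + 1 =>
    let s := ompState a b k
    if s.2 = 0 then s
    else if h : Nonempty ι then
      haveI := h
      let T' : Finset ι := insert (ompSelect a s.2) s.1
      (T', b - (Submodule.orthogonalProjection (Submodule.span ℝ (a '' (T' : Set ι))) b :
        EuclideanSpace ℝ (Fin D)))
    else s

noncomputable def ompSupport {ι : Type*} [Fintype ι] [LinearOrder ι]
    (a : ι → EuclideanSpace ℝ (Fin D)) (b : EuclideanSpace ℝ (Fin D)) (k : ℕ) : Finset ι :=
  (ompState a b k).1

noncomputable def ompResidual {ι : Type*} [Fintype ι] [LinearOrder ι]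
    (a : ι → EuclideanSpace ℝ (Fin D)) (b : EuclideanSpace ℝ (Fin D)) (k : ℕ) :
    EuclideanSpace ℝ (Fin D) :=
  (ompState a b k).2

def IsOMPOutput {ι : Type*} [Fintype ι] [LinearOrder ι]
    (a : ι → EuclideanSpace ℝ (Fin D)) (b : EuclideanSpace ℝ (Fin D)) (kmax : ℕ)
    (c : ι → ℝ) : Prop :=
  (∀ m, c m ≠ 0 → m ∈ ompSupport a b kmax) ∧
  ∀ c' : ι → ℝ, (∀ m, c' m ≠ 0 → m ∈ ompSupport a b kmax) →
    ‖b - ∑ m, c m • a m‖ ≤ ‖b - ∑ m, c' m • a m‖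

/-- Set of normalized nonzero residual directions of OMP(a, b) run with `ε = 0`
and `k_max` large enough. -/
noncomputable def residualDirs {ι : Type*} [Fintype ι] [LinearOrder ι]
    (a : ι → EuclideanSpace ℝ (Fin D)) (b : EuclideanSpace ℝ (Fin D)) :
    Set (EuclideanSpace ℝ (Fin D)) :=
  {w | ∃ k, ompResidual a b k ≠ 0 ∧ w = ‖ompResidual a b k‖⁻¹ • ompResidual a b k}

/-- Coherence between two sets of unit-norm points. -/
noncomputable def coherence (A B : Set (EuclideanSpace ℝ (Fin D))) : ℝ :=
  sSup {r : ℝ | ∃ u ∈ A, ∃ v ∈ B, r = |⟪u, v⟫|}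

/-- Symmetrized convex hull `conv(±A)`. -/
noncomputable def symmHull (A : Set (EuclideanSpace ℝ (Fin D))) :
    Set (EuclideanSpace ℝ (Fin D)) :=
  convexHull ℝ (A ∪ (-A))

/-- Inradius of a convex body: the radius of the largest Euclidean ball
(within the linear span of the body) inscribed in it. -/
noncomputable def inradius (P : Set (EuclideanSpace ℝ (Fin D))) : ℝ :=
  sSup {r : ℝ | 0 ≤ r ∧ ∃ c ∈ Submodule.span ℝ P,
    ∀ y ∈ Submodule.span ℝ P, ‖y - c‖ ≤ r → y ∈ P}

variable {n N : ℕ}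

/-- `X^i`: the set of data points lying in the `i`-th subspace. -/
noncomputable def subX (S : Fin n → Submodule ℝ (EuclideanSpace ℝ (Fin D)))
    (x : Fin N → EuclideanSpace ℝ (Fin D)) (i : Fin n) : Set (EuclideanSpace ℝ (Fin D)) :=
  x '' {m | x m ∈ S i}

/-- `X^i_{-j}`: the set of data points lying in the `i`-th subspace, with `x j` removed. -/
noncomputable def subXmin (S : Fin n → Submodule ℝ (EuclideanSpace ℝ (Fin D)))
    (x : Fin N → EuclideanSpace ℝ (Fin D)) (i : Fin n) (j : Fin N) :
    Set (EuclideanSpace ℝ (Fin D)) :=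
  x '' {m | x m ∈ S i ∧ m ≠ j}

/-- `W_j^i`: the set of OMP residual directions associated with `X^i_{-j}` and `x j`. -/
noncomputable def Wji (S : Fin n → Submodule ℝ (EuclideanSpace ℝ (Fin D)))
    (x : Fin N → EuclideanSpace ℝ (Fin D)) (i : Fin n) (j : Fin N) :
    Set (EuclideanSpace ℝ (Fin D)) :=
  residualDirs (fun m : {m : Fin N // x m ∈ S i ∧ m ≠ j} => x m.1) (x j)

/-- `W^i`: the set of OMP residual directions associated with `X^i`. -/
noncomputable def Wfull (S : Fin n → Submodule ℝ (EuclideanSpace ℝ (Fin D)))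
    (x : Fin N → EuclideanSpace ℝ (Fin D)) (i : Fin n) : Set (EuclideanSpace ℝ (Fin D)) :=
  ⋃ j ∈ {j : Fin N | x j ∈ S i}, Wji S x i j

/-- `r_i := min_{j : x_j ∈ S_i} r(P^i_{-j})`. -/
noncomputable def rMin (S : Fin n → Submodule ℝ (EuclideanSpace ℝ (Fin D)))
    (x : Fin N → EuclideanSpace ℝ (Fin D)) (i : Fin n) : ℝ :=
  sInf {r : ℝ | ∃ j, x j ∈ S i ∧ r = inradius (symmHull (subXmin S x i j))}

/-- Cosine of the principal angle between two subspaces. -/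
noncomputable def cosAngle (Si Sk : Submodule ℝ (EuclideanSpace ℝ (Fin D))) : ℝ :=
  sSup {r : ℝ | ∃ u ∈ Si, ∃ v ∈ Sk, ‖u‖ = 1 ∧ ‖v‖ = 1 ∧ r = ⟪u, v⟫}

/-!
Writing `w = ∑ ĉ m • a m` gives `|⟪b, w⟫| ≤ ∑ |ĉ m| |⟪b, a m⟫| ≤ μ ‖ĉ‖₁`. For the second
bound, if `P = conv(±X)` contains a ball of radius `r` within its span, symmetry and
convexity of `P` move that ball to the origin, so `r • w ∈ P`. Every point of `P` is `X c`
with `‖c‖₁ ≤ 1`, hence `w = X (c / r)`, and minimality of `ĉ` gives `r ‖ĉ‖₁ ≤ 1`.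
-/

open Set

section L1Ball

variable {E : Type*} [AddCommGroup E] [Module ℝ E] {ι : Type*} [Fintype ι]

def l1BallImage (a : ι → E) : Set E :=
  {v | ∃ c : ι → ℝ, v = ∑ m, c m • a m ∧ ∑ m, |c m| ≤ 1}

theorem convex_l1BallImage (a : ι → E) : Convex ℝ (l1BallImage a) := by
  rintro _ ⟨c₁, rfl, h₁⟩ _ ⟨c₂, rfl, h₂⟩ s t hs ht hst
  refine ⟨fun m => s * c₁ m + t * c₂ m, ?_, ?_⟩
  · simp only [Finset.smul_sum, smul_smul, add_smul, Finset.sum_add_distrib]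
  · calc ∑ m, |s * c₁ m + t * c₂ m| ≤ ∑ m, (s * |c₁ m| + t * |c₂ m|) :=
          Finset.sum_le_sum fun m _ => (abs_add_le _ _).trans_eq
            (by rw [abs_mul, abs_mul, abs_of_nonneg hs, abs_of_nonneg ht])
      _ = s * ∑ m, |c₁ m| + t * ∑ m, |c₂ m| := by
          rw [Finset.sum_add_distrib, Finset.mul_sum, Finset.mul_sum]
      _ ≤ s * 1 + t * 1 := by gcongr
      _ = 1 := by rw [mul_one, mul_one, hst]

theorem convexHull_range_union_neg_subset_l1BallImage (a : ι → E) :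
    convexHull ℝ (range a ∪ -range a) ⊆ l1BallImage a := by
  refine convexHull_min ?_ (convex_l1BallImage a)
  rintro y (⟨m, rfl⟩ | ⟨m, hm⟩)
  · exact ⟨Pi.single m 1, by simp [Pi.single_apply, ite_smul],
      by simp [Pi.single_apply, apply_ite abs]⟩
  · refine ⟨-Pi.single m 1, ?_, by simp [Pi.single_apply, apply_ite abs]⟩
    rw [← neg_neg y, ← hm]
    simp [Pi.single_apply, ite_smul]

theorem mul_sum_abs_le_one_of_smul_mem_l1BallImage {a : ι → E} {w : E} {ch : ι → ℝ}
    (hmin : ∀ c : ι → ℝ, w = ∑ m, c m • a m → ∑ m, |ch m| ≤ ∑ m, |c m|)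
    {r : ℝ} (hr : 0 < r) (hrw : r • w ∈ l1BallImage a) : r * ∑ m, |ch m| ≤ 1 := by
  obtain ⟨c, hc, hc₁⟩ := hrw
  have hw : w = ∑ m, (r⁻¹ * c m) • a m := by
    rw [← inv_smul_smul₀ hr.ne' w, hc, Finset.smul_sum]
    simp only [smul_smul]
  calc r * ∑ m, |ch m| ≤ r * ∑ m, |r⁻¹ * c m| := mul_le_mul_of_nonneg_left (hmin _ hw) hr.le
    _ = ∑ m, |c m| := by
        simp only [abs_mul, abs_inv, abs_of_pos hr, ← Finset.mul_sum, ← mul_assoc,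
          mul_inv_cancel₀ hr.ne', one_mul]
    _ ≤ 1 := hc₁

end L1Ball

theorem neg_mem_convexHull_union_neg {E : Type*} [AddCommGroup E] [Module ℝ E] {s : Set E}
    {x : E} (hx : x ∈ convexHull ℝ (s ∪ -s)) : -x ∈ convexHull ℝ (s ∪ -s) := by
  rwa [← neg_mem_neg, ← convexHull_neg, union_neg, neg_neg, neg_neg, union_comm]

/-- `r • w` is the midpoint of `c + r • w` and `-(c - r • w)`. -/
theorem smul_mem_of_relClosedBall_subset {F : Type*} [SeminormedAddCommGroup F]
    [NormedSpace ℝ F] {P : Set F} {V : Submodule ℝ F} (hP : Convex ℝ P)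
    (hneg : ∀ x ∈ P, -x ∈ P) {c w : F} {r : ℝ} (hr : 0 ≤ r) (hc : c ∈ V)
    (hball : ∀ y ∈ V, ‖y - c‖ ≤ r → y ∈ P) (hw : w ∈ V) (hwn : ‖w‖ ≤ 1) : r • w ∈ P := by
  have hrw : ‖r • w‖ ≤ r := by
    rw [norm_smul, Real.norm_of_nonneg hr]; exact mul_le_of_le_one_right hr hwn
  have hplus : c + r • w ∈ P :=
    hball _ (V.add_mem hc (V.smul_mem r hw)) (by rwa [add_sub_cancel_left])
  have hminus : -(c - r • w) ∈ P :=
    hneg _ (hball _ (V.sub_mem hc (V.smul_mem r hw)) (by rwa [sub_sub_cancel_left, norm_neg]))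
  convert hP hplus hminus (by norm_num : (0 : ℝ) ≤ 1 / 2) (by norm_num : (0 : ℝ) ≤ 1 / 2)
    (by norm_num) using 1
  module

theorem inradius_symmHull_mul_sum_abs_le_one {ι : Type*} [Fintype ι]
    (a : ι → EuclideanSpace ℝ (Fin D)) {w : EuclideanSpace ℝ (Fin D)} (hwn : ‖w‖ = 1)
    {ch : ι → ℝ} (hrep : w = ∑ m, ch m • a m)
    (hmin : ∀ c : ι → ℝ, w = ∑ m, c m • a m → ∑ m, |ch m| ≤ ∑ m, |c m|) :
    inradius (symmHull (range a)) * ∑ m, |ch m| ≤ 1 := by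
  rcases (Finset.sum_nonneg fun m _ => abs_nonneg (ch m)).eq_or_lt with hzero | hpos
  · rw [← hzero, mul_zero]; exact zero_le_one
  have hw : w ∈ Submodule.span ℝ (symmHull (range a)) := hrep ▸ Submodule.sum_smul_mem _ _
    fun m _ => Submodule.subset_span (subset_convexHull ℝ _ (Or.inl (mem_range_self m)))
  rw [← le_div_iff₀ hpos]
  refine Real.sSup_le ?_ (by positivity)
  rintro r ⟨hr, c, hc, hball⟩
  rw [le_div_iff₀ hpos]
  rcases hr.eq_or_lt with rfl | hr
  · rw [zero_mul]; exact zero_le_one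
  refine mul_sum_abs_le_one_of_smul_mem_l1BallImage hmin hr
    (convexHull_range_union_neg_subset_l1BallImage a ?_)
  exact smul_mem_of_relClosedBall_subset (convex_convexHull ℝ _)
    (fun _ => neg_mem_convexHull_union_neg) hr.le hc hball hw hwn.le

theorem abs_inner_sum_smul_le {E : Type*} [SeminormedAddCommGroup E] [InnerProductSpace ℝ E]
    {ι : Type*} [Fintype ι] {v : E} {a : ι → E} (c : ι → ℝ) {M : ℝ}
    (h : ∀ m, |⟪v, a m⟫| ≤ M) : |⟪v, ∑ m, c m • a m⟫| ≤ M * ∑ m, |c m| :=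
  calc |⟪v, ∑ m, c m • a m⟫| = |∑ m, c m * ⟪v, a m⟫| := by
        simp only [inner_sum, real_inner_smul_right]
    _ ≤ ∑ m, |c m| * M := (Finset.abs_sum_le_sum_abs _ _).trans <|
        Finset.sum_le_sum fun m _ => by
          rw [abs_mul]; exact mul_le_mul_of_nonneg_left (h m) (abs_nonneg _)
    _ = M * ∑ m, |c m| := by rw [← Finset.sum_mul, mul_comm]

theorem abs_inner_le_coherence {A B : Set (EuclideanSpace ℝ (Fin D))} (hA : A.Finite)
    (hB : B.Finite) {u v : EuclideanSpace ℝ (Fin D)} (hu : u ∈ A) (hv : v ∈ B) :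
    |⟪u, v⟫| ≤ coherence A B := by
  refine le_csSup ((hA.image2 (fun u v => |⟪u, v⟫|) hB).subset ?_).bddAbove ⟨u, hu, v, hv, rfl⟩
  rintro _ ⟨u, hu, v, hv, rfl⟩
  exact mem_image2_of_mem hu hv

theorem coherence_nonneg (A B : Set (EuclideanSpace ℝ (Fin D))) : 0 ≤ coherence A B :=
  Real.sSup_nonneg (by rintro _ ⟨_, -, _, -, rfl⟩; exact abs_nonneg _)

theorem dual_linf_coherence_bound_general
    {D : ℕ} {ι κ : Type*} [Fintype ι] [Fintype κ]
    (a : ι → EuclideanSpace ℝ (Fin D)) (bcols : κ → EuclideanSpace ℝ (Fin D))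
    (hinr : 0 < inradius (symmHull (Set.range a)))
    (w : EuclideanSpace ℝ (Fin D)) (hwn : ‖w‖ = 1)
    (ch : ι → ℝ)
    (hrep : w = ∑ m, ch m • a m)
    (hmin : ∀ c : ι → ℝ, w = ∑ m, c m • a m → ∑ m, |ch m| ≤ ∑ m, |c m|) :
    sSup {r : ℝ | ∃ m, r = |⟪bcols m, w⟫|} ≤
      coherence (Set.range a) (Set.range bcols) * ∑ m, |ch m| ∧
    coherence (Set.range a) (Set.range bcols) * ∑ m, |ch m| ≤
      coherence (Set.range a) (Set.range bcols) / inradius (symmHull (Set.range a)) := by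
  have hμ := coherence_nonneg (range a) (range bcols)
  refine ⟨Real.sSup_le ?_ (mul_nonneg hμ (Finset.sum_nonneg fun m _ => abs_nonneg _)), ?_⟩
  · rintro _ ⟨k, rfl⟩
    rw [hrep]
    refine abs_inner_sum_smul_le ch fun m => ?_
    rw [real_inner_comm]
    exact abs_inner_le_coherence (finite_range a) (finite_range bcols) (mem_range_self m)
      (mem_range_self k)
  · rw [le_div_iff₀ hinr, mul_assoc, mul_comm (∑ m, |ch m|)]
    exact mul_le_of_le_one_right hμ (inradius_symmHull_mul_sum_abs_le_one a hwn hrep hmin)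

/-- Let the unit-norm columns of `X^i` span `S_i`, let `w ∈ S_i` be a
unit-norm vector, and let `ĉ` minimize `‖c‖₁` subject to `w = X^i c`. Then for any matrix
`X^k` with unit-norm columns, `‖(X^k)ᵀ w‖_∞ ≤ μ(X^i, X^k) ‖ĉ‖₁ ≤ μ(X^i, X^k) / r(P^i)`. -/
theorem dual_linf_coherence_bound
    {D : ℕ} {ι κ : Type*} [Fintype ι] [Fintype κ]
    (a : ι → EuclideanSpace ℝ (Fin D)) (bcols : κ → EuclideanSpace ℝ (Fin D))
    (Si : Submodule ℝ (EuclideanSpace ℝ (Fin D)))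
    (haunit : ∀ m, ‖a m‖ = 1) (hbunit : ∀ m, ‖bcols m‖ = 1)
    (hspan : Submodule.span ℝ (Set.range a) = Si)
    (hinr : 0 < inradius (symmHull (Set.range a)))
    (w : EuclideanSpace ℝ (Fin D)) (hw : w ∈ Si) (hwn : ‖w‖ = 1)
    (ch : ι → ℝ)
    (hrep : w = ∑ m, ch m • a m)
    (hmin : ∀ c : ι → ℝ, w = ∑ m, c m • a m → ∑ m, |ch m| ≤ ∑ m, |c m|) :
    sSup {r : ℝ | ∃ m, r = |⟪bcols m, w⟫|} ≤
      coherence (Set.range a) (Set.range bcols) * ∑ m, |ch m| ∧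
    coherence (Set.range a) (Set.range bcols) * ∑ m, |ch m| ≤
      coherence (Set.range a) (Set.range bcols) / inradius (symmHull (Set.range a)) :=
  dual_linf_coherence_bound_general a bcols hinr w hwn ch hrep hmin

end SSCOMP
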